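/- arXiv:2305.02688 — 3 statements merged into one kernel-verified Lean document; each statement's English description precedes it below -/
import Mathlib

section
/- Let M be a smooth manifold with an affine connection ∇ whose curvature vanishes and whose torsion T is parallel (∇T = 0). Define on the space of smooth vector fields X(M) the operations x ▷ y = ∇_x y and [x, y] = −T(x, y). Then (X(M), [·,·], ▷) is a post-Lie algebra; in particular [·,·] is a Lie bracket and both post-Lie axioms hold. -/
/-!
Only the Lie ring of vector fields and the biadditivity of `∇` matter. The first Bianchi
identity `𝔖 R(x,y)z = 𝔖 (T(T(x,y),z) + (∇ₓT)(y,z))` holds for any such `∇`; with `R = 0` and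
`∇T = 0` it becomes the Jacobi identity for `-T`. The first post-Lie axiom is `∇T = 0` itself, and
the second is `R = 0` after expanding `∇_{T(x,y)}`.
-/

open scoped Manifold

/-- Smooth real-valued functions on a manifold. -/
abbrev SmoothFunc {E₀ : Type*} [NormedAddCommGroup E₀] [NormedSpace ℝ E₀]
    {H₀ : Type*} [TopologicalSpace H₀] (I : ModelWithCorners ℝ E₀ H₀)
    (M : Type*) [TopologicalSpace M] [ChartedSpace H₀ M] : Type _ :=
  ContMDiffMap I 𝓘(ℝ, ℝ) M ℝ (⊤ : ℕ∞)

/-- Smooth vector fields on a manifold, modelled as derivations of the algebra of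
smooth functions. -/
abbrev VectorField {E₀ : Type*} [NormedAddCommGroup E₀] [NormedSpace ℝ E₀]
    {H₀ : Type*} [TopologicalSpace H₀] (I : ModelWithCorners ℝ E₀ H₀)
    (M : Type*) [TopologicalSpace M] [ChartedSpace H₀ M] : Type _ :=
  Derivation ℝ (SmoothFunc I M) (SmoothFunc I M)

namespace LieConnection

variable {L : Type*} [LieRing L] (cov : L →+ L →+ L)

def torsion (x y : L) : L := cov x y - cov y x - ⁅x, y⁆

def curvature (x y z : L) : L := cov x (cov y z) - cov y (cov x z) - cov ⁅x, y⁆ z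

def covDerivTorsion (x y z : L) : L :=
  cov x (torsion cov y z) - torsion cov (cov x y) z - torsion cov y (cov x z)

theorem torsion_swap (x y : L) : torsion cov y x = -torsion cov x y := by
  rw [torsion, torsion, ← lie_skew]
  abel

theorem torsion_neg_left (x y : L) : torsion cov (-x) y = -torsion cov x y := by
  simp only [torsion, map_neg, AddMonoidHom.neg_apply, neg_lie]
  abel

theorem curvature_cyclic_sum (x y z : L) :
    curvature cov x y z + curvature cov y z x + curvature cov z x y =
      torsion cov (torsion cov x y) z + torsion cov (torsion cov y z) x +
          torsion cov (torsion cov z x) y +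
        (covDerivTorsion cov x y z + covDerivTorsion cov y z x + covDerivTorsion cov z x y) := by
  have jacobi := lie_jacobi x y z
  simp only [curvature, covDerivTorsion, torsion, map_sub, AddMonoidHom.sub_apply, sub_lie]
  rw [← lie_skew y (cov x z), ← lie_skew z (cov y x), ← lie_skew x (cov z y),
    ← lie_skew ⁅x, y⁆ z, ← lie_skew ⁅y, z⁆ x, ← lie_skew ⁅z, x⁆ y]
  linear_combination (norm := abel) jacobi

theorem torsion_torsion_cyclic_sum_eq_zero (hflat : ∀ x y z, curvature cov x y z = 0)
    (hpar : ∀ x y z, covDerivTorsion cov x y z = 0) (x y z : L) :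
    torsion cov (torsion cov x y) z + torsion cov (torsion cov y z) x +
      torsion cov (torsion cov z x) y = 0 := by
  simpa only [hflat, hpar, add_zero, eq_comm] using curvature_cyclic_sum cov x y z

theorem cov_torsion_of_covDerivTorsion_eq_zero {x y z : L}
    (hpar : covDerivTorsion cov x y z = 0) :
    cov x (torsion cov y z) = torsion cov (cov x y) z + torsion cov y (cov x z) := by
  rwa [covDerivTorsion, sub_sub, sub_eq_zero] at hpar

theorem cov_torsion_left_of_curvature_eq_zero {x y z : L} (hflat : curvature cov x y z = 0) :
    cov (torsion cov x y) z =
      cov (cov x y) z - cov (cov y x) z - (cov x (cov y z) - cov y (cov x z)) := by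
  rw [curvature, sub_eq_zero] at hflat
  simp only [torsion, map_sub, AddMonoidHom.sub_apply, hflat]

end LieConnection

open LieConnection

theorem postLie_of_flat_connection_with_parallel_torsion_general
    {E₀ : Type*} [NormedAddCommGroup E₀] [NormedSpace ℝ E₀]
    {H₀ : Type*} [TopologicalSpace H₀] (I : ModelWithCorners ℝ E₀ H₀)
    (M : Type*) [TopologicalSpace M] [ChartedSpace H₀ M]
    -- an affine connection on `M`
    (cov : VectorField I M → VectorField I M → VectorField I M)
    (haddl : ∀ x y z : VectorField I M, cov (x + y) z = cov x z + cov y z)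
    (haddr : ∀ x y z : VectorField I M, cov x (y + z) = cov x y + cov x z)
    -- the torsion of `cov`
    (T : VectorField I M → VectorField I M → VectorField I M)
    (hT : ∀ x y, T x y = cov x y - cov y x - ⁅x, y⁆)
    -- vanishing curvature
    (hflat : ∀ x y z : VectorField I M, cov x (cov y z) - cov y (cov x z) - cov ⁅x, y⁆ z = 0)
    -- parallel torsion: `cov T = 0`
    (hparT : ∀ x y z, cov x (T y z) = T (cov x y) z + T y (cov x z))
    -- the would-be post-Lie bracket `[x, y] = -T x y`
    (b : VectorField I M → VectorField I M → VectorField I M)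
    (hb : ∀ x y, b x y = -(T x y)) :
    -- `b` is a Lie bracket:
    (∀ x y, b x y = -(b y x)) ∧
    (∀ x y z, b (b x y) z + b (b y z) x + b (b z x) y = 0) ∧
    -- first post-Lie axiom: `x ▷ [y,z] = [x ▷ y, z] + [y, x ▷ z]`
    (∀ x y z, cov x (b y z) = b (cov x y) z + b y (cov x z)) ∧
    -- second post-Lie axiom: `[x,y] ▷ z = a▷(x,y,z) - a▷(y,x,z)`
    (∀ x y z, cov (b x y) z =
      (cov x (cov y z) - cov (cov x y) z) - (cov y (cov x z) - cov (cov y x) z)) := by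
  obtain ⟨conn, rfl⟩ : ∃ conn : VectorField I M →+ VectorField I M →+ VectorField I M,
      cov = fun x y ↦ conn x y :=
    ⟨.mk' (fun x ↦ .mk' (cov x) (haddr x)) fun x y ↦ AddMonoidHom.ext (haddl x y), rfl⟩
  obtain rfl : T = torsion conn := funext₂ hT
  obtain rfl : b = fun x y ↦ -torsion conn x y := funext₂ hb
  beta_reduce at hflat hparT ⊢
  have hpar (x y z) : covDerivTorsion conn x y z = 0 := by
    rw [covDerivTorsion, sub_sub, sub_eq_zero]
    exact hparT x y z
  refine ⟨fun x y ↦ by rw [torsion_swap, neg_neg], fun x y z ↦ ?_, fun x y z ↦ ?_,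
    fun x y z ↦ ?_⟩
  · simpa only [torsion_neg_left, neg_neg] using
      torsion_torsion_cyclic_sum_eq_zero conn hflat hpar x y z
  · rw [map_neg, cov_torsion_of_covDerivTorsion_eq_zero conn (hpar x y z), neg_add]
  · rw [map_neg, AddMonoidHom.neg_apply,
      cov_torsion_left_of_curvature_eq_zero conn (hflat x y z)]
    abel

/-- For a smooth manifold `M` with an affine connection `cov` whose curvature
vanishes and whose torsion `T` is parallel, the operations `x ▷ y = cov x y` and
`[x,y] = -T x y` make the vector fields of `M` into a post-Lie algebra. -/
theorem postLie_of_flat_connection_with_parallel_torsion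
    {E₀ : Type*} [NormedAddCommGroup E₀] [NormedSpace ℝ E₀]
    {H₀ : Type*} [TopologicalSpace H₀] (I : ModelWithCorners ℝ E₀ H₀)
    (M : Type*) [TopologicalSpace M] [ChartedSpace H₀ M] [IsManifold I (⊤ : ℕ∞) M]
    -- an affine connection on `M`
    (cov : VectorField I M → VectorField I M → VectorField I M)
    (haddl : ∀ x y z : VectorField I M, cov (x + y) z = cov x z + cov y z)
    (haddr : ∀ x y z : VectorField I M, cov x (y + z) = cov x y + cov x z)
    (hsmul : ∀ (f : SmoothFunc I M) (x y : VectorField I M), cov (f • x) y = f • cov x y)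
    (hleib : ∀ (f : SmoothFunc I M) (x y : VectorField I M),
      cov x (f • y) = (x f) • y + f • cov x y)
    -- the torsion of `cov`
    (T : VectorField I M → VectorField I M → VectorField I M)
    (hT : ∀ x y, T x y = cov x y - cov y x - ⁅x, y⁆)
    -- vanishing curvature
    (hflat : ∀ x y z : VectorField I M, cov x (cov y z) - cov y (cov x z) - cov ⁅x, y⁆ z = 0)
    -- parallel torsion: `cov T = 0`
    (hparT : ∀ x y z, cov x (T y z) = T (cov x y) z + T y (cov x z))
    -- the would-be post-Lie bracket `[x, y] = -T x y`
    (b : VectorField I M → VectorField I M → VectorField I M)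
    (hb : ∀ x y, b x y = -(T x y)) :
    -- `b` is a Lie bracket:
    (∀ x y, b x y = -(b y x)) ∧
    (∀ x y z, b (b x y) z + b (b y z) x + b (b z x) y = 0) ∧
    -- first post-Lie axiom: `x ▷ [y,z] = [x ▷ y, z] + [y, x ▷ z]`
    (∀ x y z, cov x (b y z) = b (cov x y) z + b y (cov x z)) ∧
    -- second post-Lie axiom: `[x,y] ▷ z = a▷(x,y,z) - a▷(y,x,z)`
    (∀ x y z, cov (b x y) z =
      (cov x (cov y z) - cov (cov x y) z) - (cov y (cov x z) - cov (cov y x) z)) :=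
  postLie_of_flat_connection_with_parallel_torsion_general I M cov haddl haddr T hT hflat hparT b hb
end

section
/- Let V be a finite-dimensional real vector space, h ⊆ gl(V) a Lie subalgebra, T : V × V → V an antisymmetric bilinear map, and R : V × V → h an antisymmetric bilinear map. Assume: (i) for all A ∈ h, a, b ∈ V: A(T(a,b)) = T(Aa, b) + T(a, Ab); (ii) for all A ∈ h, a, b ∈ V: [A, R(a,b)] = R(Aa, b) + R(a, Ab) (bracket in gl(V)); (iii) the first Bianchi identity: the cyclic sum over (a,b,c) of R(a,b)c equals the cyclic sum of T(T(a,b), c); (iv) the second Bianchi identity: the cyclic sum over (a,b,c) of R(T(a,b), c) vanishes. Then the bracket on g = V ⊕ h defined by [a, b] = −T(a,b) + R(a,b) for a, b ∈ V, [A, a] = −Aa for A ∈ h, a ∈ V, and [A, B] = −(AB − BA) for A, B ∈ h, is a Lie bracket (it is antisymmetric and satisfies the Jacobi identity). -/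
attribute [local instance 100] LieRing.ofAssociativeRing

/-!
Write the Jacobiator of three elements `a + A`, `b + B`, `c + C` of `V ⊕ h` componentwise.
In the `V`-component the terms cubic in `V` cancel by the first Bianchi identity, those with
one endomorphism by the derivation property (i) of `A, B, C` on `T`, and those with two
endomorphisms by associativity of composition in `gl(V)`. In the `gl(V)`-component the same
happens with the second Bianchi identity, property (ii), and the Jacobi identity of `gl(V)`.
-/

section

variable {K V : Type*} [CommRing K] [AddCommGroup V] [Module K V]

def torsionCurvatureBracket (T : V →ₗ[K] V →ₗ[K] V) (R : V →ₗ[K] V →ₗ[K] Module.End K V)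
    (p q : V × Module.End K V) : V × Module.End K V :=
  (-(T p.1 q.1) - p.2 q.1 + q.2 p.1, R p.1 q.1 - (p.2 * q.2 - q.2 * p.2))

variable {T : V →ₗ[K] V →ₗ[K] V} {R : V →ₗ[K] V →ₗ[K] Module.End K V}

theorem torsionCurvatureBracket_antisymm (hT : ∀ a b, T a b = -T b a)
    (hR : ∀ a b, R a b = -R b a) (p q : V × Module.End K V) :
    torsionCurvatureBracket T R p q = -torsionCurvatureBracket T R q p := by
  simp only [torsionCurvatureBracket, Prod.neg_mk, Prod.mk.injEq]
  constructor
  · rw [hT p.1 q.1]; abel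
  · rw [hR p.1 q.1]; abel

theorem torsionCurvatureBracket_jacobi_fst (hT : ∀ a b, T a b = -T b a)
    (hBianchi1 : ∀ a b c : V,
      R a b c + R b c a + R c a b = T (T a b) c + T (T b c) a + T (T c a) b)
    {A B C : Module.End K V} (hA : ∀ a b, A (T a b) = T (A a) b + T a (A b))
    (hB : ∀ a b, B (T a b) = T (B a) b + T a (B b))
    (hC : ∀ a b, C (T a b) = T (C a) b + T a (C b)) (a b c : V) :
    (torsionCurvatureBracket T R (a, A) (torsionCurvatureBracket T R (b, B) (c, C)) +
      torsionCurvatureBracket T R (b, B) (torsionCurvatureBracket T R (c, C) (a, A)) +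
      torsionCurvatureBracket T R (c, C) (torsionCurvatureBracket T R (a, A) (b, B))).1 = 0 := by
  simp only [torsionCurvatureBracket, Prod.fst_add, map_add, map_sub, map_neg,
    LinearMap.sub_apply, Module.End.mul_apply]
  linear_combination (norm := module)
    hBianchi1 a b c + hT a (T b c) + hT b (T c a) + hT c (T a b)
    + hA b c + hB c a + hC a b + hT a (B c) + hT b (C a) + hT c (A b)

theorem torsionCurvatureBracket_jacobi_snd (hR : ∀ a b, R a b = -R b a)
    (hBianchi2 : ∀ a b c : V, R (T a b) c + R (T b c) a + R (T c a) b = 0)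
    {A B C : Module.End K V} (hA : ∀ a b, ⁅A, R a b⁆ = R (A a) b + R a (A b))
    (hB : ∀ a b, ⁅B, R a b⁆ = R (B a) b + R a (B b))
    (hC : ∀ a b, ⁅C, R a b⁆ = R (C a) b + R a (C b)) (a b c : V) :
    (torsionCurvatureBracket T R (a, A) (torsionCurvatureBracket T R (b, B) (c, C)) +
      torsionCurvatureBracket T R (b, B) (torsionCurvatureBracket T R (c, C) (a, A)) +
      torsionCurvatureBracket T R (c, C) (torsionCurvatureBracket T R (a, A) (b, B))).2 = 0 := by
  have hAbc := hA b c
  have hBca := hB c a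
  have hCab := hC a b
  simp only [Ring.lie_def] at hAbc hBca hCab
  simp only [torsionCurvatureBracket, Prod.snd_add, map_add, map_sub, map_neg,
    LinearMap.sub_apply, mul_sub, sub_mul, mul_assoc]
  linear_combination (norm := module)
    hBianchi2 a b c - hR a (T b c) - hR b (T c a) - hR c (T a b)
    - hAbc - hBca - hCab - hR a (B c) - hR (A b) c - hR (C a) b

end

theorem lie_bracket_on_V_oplus_h_general
    {V : Type*} [AddCommGroup V] [Module ℝ V]
    (h : LieSubalgebra ℝ (Module.End ℝ V))
    (T : V →ₗ[ℝ] V →ₗ[ℝ] V) (R : V →ₗ[ℝ] V →ₗ[ℝ] Module.End ℝ V)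
    -- antisymmetry of `T` and `R`
    (hTanti : ∀ a b, T a b = -T b a)
    (hRanti : ∀ a b, R a b = -R b a)
    -- (i) `A(T(a,b)) = T(Aa,b) + T(a,Ab)` for `A ∈ h`
    (hi : ∀ A ∈ h, ∀ a b, A (T a b) = T (A a) b + T a (A b))
    -- (ii) `[A, R(a,b)] = R(Aa,b) + R(a,Ab)` for `A ∈ h`
    (hii : ∀ A ∈ h, ∀ a b, ⁅A, R a b⁆ = R (A a) b + R a (A b))
    -- (iii) first Bianchi identity
    (hBianchi1 : ∀ a b c : V,
      R a b c + R b c a + R c a b = T (T a b) c + T (T b c) a + T (T c a) b)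
    -- (iv) second Bianchi identity
    (hBianchi2 : ∀ a b c : V, R (T a b) c + R (T b c) a + R (T c a) b = 0)
    -- the bracket on `g = V ⊕ h`
    (br : V × Module.End ℝ V → V × Module.End ℝ V → V × Module.End ℝ V)
    (hbr : ∀ (a b : V) (A B : Module.End ℝ V),
      br (a, A) (b, B) = (-(T a b) - A b + B a, R a b - (A * B - B * A))) :
    -- antisymmetry
    (∀ p q, br p q = -(br q p)) ∧
    -- Jacobi identity (for elements of `g = V ⊕ h`)
    (∀ p q r : V × Module.End ℝ V, p.2 ∈ h → q.2 ∈ h → r.2 ∈ h →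
      br p (br q r) + br q (br r p) + br r (br p q) = 0) := by
  obtain rfl : br = torsionCurvatureBracket T R := funext₂ fun p q => hbr p.1 q.1 p.2 q.2
  refine ⟨torsionCurvatureBracket_antisymm hTanti hRanti, ?_⟩
  rintro ⟨a, A⟩ ⟨b, B⟩ ⟨c, C⟩ hA hB hC
  exact Prod.ext
    (torsionCurvatureBracket_jacobi_fst hTanti hBianchi1 (hi A hA) (hi B hB) (hi C hC) a b c)
    (torsionCurvatureBracket_jacobi_snd hRanti hBianchi2 (hii A hA) (hii B hB) (hii C hC) a b c)

/-- given a finite-dimensional real vector space `V`, a Lie subalgebra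
`h ⊆ gl(V)`, antisymmetric bilinear maps `T : V × V → V` and `R : V × V → h` satisfying the
holonomy equivariance conditions (i)–(ii) and the two Bianchi identities (iii)–(iv), the
bracket on `g = V ⊕ h` given by `[a,b] = -T(a,b) + R(a,b)`, `[A,a] = -Aa`,
`[A,B] = -(AB - BA)` is a Lie bracket: antisymmetric and satisfying the Jacobi identity. -/
theorem lie_bracket_on_V_oplus_h
    {V : Type*} [AddCommGroup V] [Module ℝ V] [FiniteDimensional ℝ V]
    (h : LieSubalgebra ℝ (Module.End ℝ V))
    (T : V →ₗ[ℝ] V →ₗ[ℝ] V) (R : V →ₗ[ℝ] V →ₗ[ℝ] Module.End ℝ V)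
    -- antisymmetry of `T` and `R`
    (hTanti : ∀ a b, T a b = -T b a)
    (hRanti : ∀ a b, R a b = -R b a)
    -- `R` takes values in `h`
    (hRmem : ∀ a b, R a b ∈ h)
    -- (i) `A(T(a,b)) = T(Aa,b) + T(a,Ab)` for `A ∈ h`
    (hi : ∀ A ∈ h, ∀ a b, A (T a b) = T (A a) b + T a (A b))
    -- (ii) `[A, R(a,b)] = R(Aa,b) + R(a,Ab)` for `A ∈ h`
    (hii : ∀ A ∈ h, ∀ a b, ⁅A, R a b⁆ = R (A a) b + R a (A b))
    -- (iii) first Bianchi identity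
    (hBianchi1 : ∀ a b c : V,
      R a b c + R b c a + R c a b = T (T a b) c + T (T b c) a + T (T c a) b)
    -- (iv) second Bianchi identity
    (hBianchi2 : ∀ a b c : V, R (T a b) c + R (T b c) a + R (T c a) b = 0)
    -- the bracket on `g = V ⊕ h`
    (br : V × Module.End ℝ V → V × Module.End ℝ V → V × Module.End ℝ V)
    (hbr : ∀ (a b : V) (A B : Module.End ℝ V),
      br (a, A) (b, B) = (-(T a b) - A b + B a, R a b - (A * B - B * A))) :
    -- antisymmetry
    (∀ p q, br p q = -(br q p)) ∧
    -- Jacobi identity (for elements of `g = V ⊕ h`)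
    (∀ p q r : V × Module.End ℝ V, p.2 ∈ h → q.2 ∈ h → r.2 ∈ h →
      br p (br q r) + br q (br r p) + br r (br p q) = 0) :=
  lie_bracket_on_V_oplus_h_general h T R hTanti hRanti hi hii hBianchi1 hBianchi2 br hbr
end

section
/- Let M be a smooth manifold with an affine connection ∇ that is flat (curvature R = 0) and has parallel torsion (∇T = 0). Then the torsion satisfies the Jacobi-type identity: for all vector fields x, y, z, T(T(x,y), z) + T(T(y,z), x) + T(T(z,x), y) = 0. Consequently, at each point p ∈ M, the bracket [u, v] := −T_p(u, v) makes the tangent space T_pM into a Lie algebra. -/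
/-!
The first Bianchi identity for a connection with torsion,
`𝔖 R(x,y)z = 𝔖 (T(T(x,y),z) + (∇ₓT)(y,z))`, is a purely algebraic consequence of the
additivity of `∇` and the Jacobi identity for the bracket of vector fields, so it holds for any
biadditive `∇` on a Lie ring. When `R = 0` and `∇T = 0` only `𝔖 T(T(x,y),z)` survives, which is
therefore zero; since `T` is also antisymmetric and biadditive, `-T` is a Lie bracket.
-/

open scoped Manifold

namespace Connection

variable {L : Type*} [LieRing L] (D : L →+ L →+ L)

def torsion (x y : L) : L := D x y - D y x - ⁅x, y⁆

def curvature (x y z : L) : L := D x (D y z) - D y (D x z) - D ⁅x, y⁆ z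

def covDerivTorsion (x y z : L) : L :=
  D x (torsion D y z) - torsion D (D x y) z - torsion D y (D x z)

theorem torsion_antisymm (x y : L) : torsion D y x = -torsion D x y := by
  simp only [torsion, ← lie_skew x y]
  abel

theorem torsion_neg_left (x y : L) : torsion D (-x) y = -torsion D x y := by
  simp only [torsion, map_neg, AddMonoidHom.neg_apply, neg_lie]
  abel

theorem curvature_cyclic_sum (x y z : L) :
    curvature D x y z + curvature D y z x + curvature D z x y =
      torsion D (torsion D x y) z + torsion D (torsion D y z) x + torsion D (torsion D z x) y +
        (covDerivTorsion D x y z + covDerivTorsion D y z x + covDerivTorsion D z x y) := by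
  have jacobi := lie_jacobi x y z
  simp only [curvature, covDerivTorsion, torsion, map_sub, AddMonoidHom.sub_apply, sub_lie]
  rw [← lie_skew x (D z y), ← lie_skew y (D x z), ← lie_skew z (D y x), ← lie_skew ⁅x, y⁆ z,
    ← lie_skew ⁅y, z⁆ x, ← lie_skew ⁅z, x⁆ y, ← sub_eq_zero, ← jacobi]
  abel

theorem torsion_jacobi_of_flat_of_parallel (hflat : ∀ x y z, curvature D x y z = 0)
    (hpar : ∀ x y z, covDerivTorsion D x y z = 0) (x y z : L) :
    torsion D (torsion D x y) z + torsion D (torsion D y z) x + torsion D (torsion D z x) y = 0 := by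
  simpa only [hflat, hpar, add_zero, eq_comm] using curvature_cyclic_sum D x y z

end Connection

theorem torsion_jacobi_of_flat_parallel_general
    {E₀ : Type*} [NormedAddCommGroup E₀] [NormedSpace ℝ E₀]
    {H₀ : Type*} [TopologicalSpace H₀] (I : ModelWithCorners ℝ E₀ H₀)
    (M : Type*) [TopologicalSpace M] [ChartedSpace H₀ M]
    (cov : VectorField I M → VectorField I M → VectorField I M)
    (haddl : ∀ x y z : VectorField I M, cov (x + y) z = cov x z + cov y z)
    (haddr : ∀ x y z : VectorField I M, cov x (y + z) = cov x y + cov x z)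
    (T : VectorField I M → VectorField I M → VectorField I M)
    (hT : ∀ x y, T x y = cov x y - cov y x - ⁅x, y⁆)
    -- flatness: curvature `R = 0`
    (hflat : ∀ x y z : VectorField I M, cov x (cov y z) - cov y (cov x z) - cov ⁅x, y⁆ z = 0)
    -- parallel torsion: `∇ T = 0`
    (hparT : ∀ x y z, cov x (T y z) = T (cov x y) z + T y (cov x z)) :
    -- the Jacobi-type identity for the torsion
    (∀ x y z, T (T x y) z + T (T y z) x + T (T z x) y = 0) ∧
    -- consequently `[u,v] := -T u v` is antisymmetric and satisfies the Jacobi identity,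
    -- i.e. it is a Lie bracket (in particular on each tangent space `T_p M`)
    (∀ x y, -(T x y) = -(-(T y x))) ∧
    (∀ x y z, -(T (-(T x y)) z) + -(T (-(T y z)) x) + -(T (-(T z x)) y) = 0) := by
  let D : VectorField I M →+ VectorField I M →+ VectorField I M :=
    AddMonoidHom.mk' (fun x => AddMonoidHom.mk' (cov x) (haddr x))
      fun x y => AddMonoidHom.ext (haddl x y)
  obtain rfl : T = Connection.torsion D := funext₂ hT
  have jacobi := Connection.torsion_jacobi_of_flat_of_parallel D hflat
    fun x y z => by rw [Connection.covDerivTorsion, sub_sub, sub_eq_zero]; exact hparT x y z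
  refine ⟨jacobi, fun x y => by rw [neg_neg, Connection.torsion_antisymm D x y], fun x y z => ?_⟩
  simpa only [Connection.torsion_neg_left, neg_neg] using jacobi x y z

/-- for a flat affine connection with parallel torsion, the torsion satisfies
the Jacobi-type identity, so `-T` is a Lie bracket on vector fields (and hence on each
tangent space). -/
theorem torsion_jacobi_of_flat_parallel
    {E₀ : Type*} [NormedAddCommGroup E₀] [NormedSpace ℝ E₀]
    {H₀ : Type*} [TopologicalSpace H₀] (I : ModelWithCorners ℝ E₀ H₀)
    (M : Type*) [TopologicalSpace M] [ChartedSpace H₀ M] [IsManifold I (⊤ : ℕ∞) M]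
    (cov : VectorField I M → VectorField I M → VectorField I M)
    (haddl : ∀ x y z : VectorField I M, cov (x + y) z = cov x z + cov y z)
    (haddr : ∀ x y z : VectorField I M, cov x (y + z) = cov x y + cov x z)
    (hsmul : ∀ (f : SmoothFunc I M) (x y : VectorField I M), cov (f • x) y = f • cov x y)
    (hleib : ∀ (f : SmoothFunc I M) (x y : VectorField I M),
      cov x (f • y) = (x f) • y + f • cov x y)
    (T : VectorField I M → VectorField I M → VectorField I M)
    (hT : ∀ x y, T x y = cov x y - cov y x - ⁅x, y⁆)
    -- flatness: curvature `R = 0`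
    (hflat : ∀ x y z : VectorField I M, cov x (cov y z) - cov y (cov x z) - cov ⁅x, y⁆ z = 0)
    -- parallel torsion: `∇ T = 0`
    (hparT : ∀ x y z, cov x (T y z) = T (cov x y) z + T y (cov x z)) :
    -- the Jacobi-type identity for the torsion
    (∀ x y z, T (T x y) z + T (T y z) x + T (T z x) y = 0) ∧
    -- consequently `[u,v] := -T u v` is antisymmetric and satisfies the Jacobi identity,
    -- i.e. it is a Lie bracket (in particular on each tangent space `T_p M`)
    (∀ x y, -(T x y) = -(-(T y x))) ∧
    (∀ x y z, -(T (-(T x y)) z) + -(T (-(T y z)) x) + -(T (-(T z x)) y) = 0) :=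
  torsion_jacobi_of_flat_parallel_general I M cov haddl haddr T hT hflat hparT
end
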